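/- arXiv:2007.10245 — 3 statements merged into one kernel-verified Lean document; each statement's English description precedes it below -/
import Mathlib

section
/- Let 0 < α < 1, 1 < p < ∞ with αp > 1, and f ∈ L^p((a,b)). Then the left Riemann–Liouville fractional integral I^α f satisfies |I^α f(x) - I^α f(y)| ≤ C‖f‖_{L^p((a,b))} |x-y|^{α-1/p} for all x,y ∈ [a,b], where C depends only on α and p; in particular I^α f extends to a Hölder continuous function of exponent α - 1/p on [a,b]. -/
open MeasureTheory Real Set Filter Topology
open scoped ENNReal

/-- Left Riemann–Liouville fractional integral of order `α` on `(a, ·)`. -/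
noncomputable def leftRLInt (α a : ℝ) (u : ℝ → ℝ) (x : ℝ) : ℝ :=
  (1 / Real.Gamma α) * ∫ y in a..x, u y * (x - y) ^ (α - 1)

/-- Left Riemann–Liouville fractional derivative of order `α` on `(a, ·)`. -/
noncomputable def leftRLDeriv (α a : ℝ) (u : ℝ → ℝ) (x : ℝ) : ℝ :=
  (1 / Real.Gamma (1 - α)) * deriv (fun z => ∫ y in a..z, u y * (z - y) ^ (-α)) x

/-- Right Riemann–Liouville fractional derivative of order `α` on `ℝ`. -/
noncomputable def rightRLDerivR (α : ℝ) (φ : ℝ → ℝ) (x : ℝ) : ℝ :=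
  -(1 / Real.Gamma (1 - α)) * deriv (fun z => ∫ y in Set.Ioi z, φ y * (y - z) ^ (-α)) x

/-- Left Riemann–Liouville fractional derivative of order `α` on `ℝ` (lower limit `-∞`). -/
noncomputable def leftRLDerivR (α : ℝ) (φ : ℝ → ℝ) (x : ℝ) : ℝ :=
  (1 / Real.Gamma (1 - α)) * deriv (fun z => ∫ y in Set.Iio z, φ y * (z - y) ^ (-α)) x

/-- `v` is the left weak fractional derivative of order `α` of `u` on `Ω`:
`∫ v φ = ∫ u D₊^α φ` for all test functions `φ` compactly supported in `Ω`. -/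
def IsLeftWeakFracDerivOn (α : ℝ) (Ω : Set ℝ) (u v : ℝ → ℝ) : Prop :=
  ∀ φ : ℝ → ℝ, ContDiff ℝ (⊤ : ℕ∞) φ → HasCompactSupport φ → tsupport φ ⊆ Ω →
    ∫ x in Ω, v x * φ x = ∫ x in Ω, u x * rightRLDerivR α φ x

/-! For `y ≤ x`, `Γ(α) (I^α f x - I^α f y)` splits as
`∫_a^y f(t) ((x-t)^(α-1) - (y-t)^(α-1)) dt + ∫_y^x f(t) (x-t)^(α-1) dt`,
and by Hölder each term is at most `‖f‖_p` times the `L^q` norm of its kernel.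
Put `β = (α-1)q + 1 = q(α - 1/p) > 0`. The second kernel has `∫ |k|^q = (x-y)^β/β`.
For the first, superadditivity of `u ↦ u^q` gives
`|(y-t)^(α-1) - (x-t)^(α-1)|^q ≤ (y-t)^((α-1)q) - (x-t)^((α-1)q)`,
whose integral over `(a, y)` telescopes to at most `(x-y)^β/β`.
Both terms are thus `≤ ‖f‖_p β^(-1/q) (x-y)^(α-1/p)`. -/

lemma Real.rpow_sub_le_rpow_sub_rpow {a b q : ℝ} (hb : 0 ≤ b) (hba : b ≤ a) (hq : 1 ≤ q) :
    (a - b) ^ q ≤ a ^ q - b ^ q := by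
  lift b to NNReal using hb
  lift a - b to NNReal using sub_nonneg.2 hba with c hc
  have := NNReal.add_rpow_le_rpow_add c b hq
  rw [le_sub_iff_add_le, ← sub_add_cancel a b, ← hc]
  exact_mod_cast this

lemma Real.HolderConjugate.sub_one_mul_add_one_div {p q : ℝ} (hpq : p.HolderConjugate q)
    (α : ℝ) : ((α - 1) * q + 1) / q = α - 1 / p := by
  have hq := hpq.symm.ne_zero
  rw [one_div, eq_sub_of_add_eq hpq.inv_add_inv_eq_one]
  field_simp
  ring

lemma MeasureTheory.MemLp.toReal_eLpNorm_ofReal {X : Type*} [MeasurableSpace X] {μ : Measure X}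
    {p : ℝ} (hp : 0 < p) {f : X → ℝ} (hf : MemLp f (ENNReal.ofReal p) μ) :
    (eLpNorm f (ENNReal.ofReal p) μ).toReal = (∫ t, ‖f t‖ ^ p ∂μ) ^ (1 / p) := by
  rw [hf.eLpNorm_eq_integral_rpow_norm (by simpa using hp) ENNReal.ofReal_ne_top,
    ENNReal.toReal_ofReal (by positivity), ENNReal.toReal_ofReal hp.le, one_div]

lemma abs_integral_mul_le_toReal_eLpNorm_mul {X : Type*} [MeasurableSpace X] {μ : Measure X}
    {p q : ℝ} (hpq : p.HolderConjugate q) {f g : X → ℝ} (hf : MemLp f (ENNReal.ofReal p) μ)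
    (hg : MemLp g (ENNReal.ofReal q) μ) {K : ℝ} (hK : ∫ t, ‖g t‖ ^ q ∂μ ≤ K) :
    |∫ t, f t * g t ∂μ| ≤ (eLpNorm f (ENNReal.ofReal p) μ).toReal * K ^ (1 / q) := by
  have := hpq.symm.one_div_nonneg
  rw [hf.toReal_eLpNorm_ofReal hpq.pos]
  calc |∫ t, f t * g t ∂μ| ≤ ∫ t, ‖f t‖ * ‖g t‖ ∂μ := by
        rw [← norm_eq_abs]
        simpa only [norm_mul] using norm_integral_le_integral_norm (fun t => f t * g t)
    _ ≤ (∫ t, ‖f t‖ ^ p ∂μ) ^ (1 / p) * (∫ t, ‖g t‖ ^ q ∂μ) ^ (1 / q) :=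
        integral_mul_norm_le_Lp_mul_Lq hpq hf hg
    _ ≤ (∫ t, ‖f t‖ ^ p ∂μ) ^ (1 / p) * K ^ (1 / q) := by gcongr

lemma abs_intervalIntegral_mul_le_of_Ioc_subset {p q : ℝ} (hpq : p.HolderConjugate q)
    {a b c d K : ℝ} {f g : ℝ → ℝ}
    (hf : MemLp f (ENNReal.ofReal p) (volume.restrict (Ioc a b)))
    (hac : a ≤ c) (hcd : c ≤ d) (hdb : d ≤ b)
    (hg : MemLp g (ENNReal.ofReal q) (volume.restrict (Ioc c d)))
    (hK : ∫ t in Ioc c d, ‖g t‖ ^ q ≤ K) :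
    |∫ t in c..d, f t * g t| ≤
      (eLpNorm f (ENNReal.ofReal p) (volume.restrict (Ioc a b))).toReal * K ^ (1 / q) := by
  have hμ := Measure.restrict_mono (μ := volume) (Ioc_subset_Ioc hac hdb) le_rfl
  have hK0 : 0 ≤ K := (integral_nonneg fun _ => rpow_nonneg (norm_nonneg _) _).trans hK
  rw [intervalIntegral.integral_of_le hcd]
  refine (abs_integral_mul_le_toReal_eLpNorm_mul hpq (hf.mono_measure hμ) hg hK).trans ?_
  exact mul_le_mul_of_nonneg_right
    (ENNReal.toReal_mono hf.eLpNorm_ne_top (eLpNorm_mono_measure _ hμ)) (rpow_nonneg hK0 _)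

lemma integrableOn_sub_rpow_Ioc {r : ℝ} (hr : -1 < r) (c e : ℝ) :
    IntegrableOn (fun t => (e - t) ^ r) (Ioc c e) := by
  have h := (intervalIntegral.intervalIntegrable_rpow' hr).comp_sub_left e (a := 0) (b := e - c)
  rw [sub_zero, sub_sub_cancel] at h
  exact (intervalIntegrable_iff.1 h.symm).mono_set Ioc_subset_uIoc

lemma integral_sub_rpow {r : ℝ} (hr : -1 < r) (c d e : ℝ) :
    ∫ t in c..d, (e - t) ^ r = ((e - c) ^ (r + 1) - (e - d) ^ (r + 1)) / (r + 1) := by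
  rw [intervalIntegral.integral_comp_sub_left (fun s : ℝ => s ^ r) e,
    integral_rpow (Or.inl hr)]

lemma Real.norm_rpow_rpow_of_nonneg {u s q : ℝ} (hu : 0 ≤ u) :
    ‖u ^ s‖ ^ q = u ^ (s * q) := by
  rw [norm_of_nonneg (rpow_nonneg hu s), ← rpow_mul hu]

lemma memLp_sub_rpow_Ioc {s q : ℝ} (hq : 0 < q) (hsq : -1 < s * q) (c e : ℝ) :
    MemLp (fun t => (e - t) ^ s) (ENNReal.ofReal q) (volume.restrict (Ioc c e)) := by
  have hmeas : AEStronglyMeasurable (fun t : ℝ => (e - t) ^ s) (volume.restrict (Ioc c e)) :=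
    (by fun_prop : Measurable fun t : ℝ => (e - t) ^ s).aestronglyMeasurable
  have hq0 : ENNReal.ofReal q ≠ 0 := by simpa using hq
  rw [← memLp_norm_rpow_iff hmeas hq0 ENNReal.ofReal_ne_top,
    ENNReal.div_self hq0 ENNReal.ofReal_ne_top, ENNReal.toReal_ofReal hq.le,
    memLp_one_iff_integrable]
  refine (integrableOn_sub_rpow_Ioc hsq c e).congr_fun (fun t ht => ?_) measurableSet_Ioc
  exact (norm_rpow_rpow_of_nonneg (sub_nonneg.2 ht.2)).symm

lemma setIntegral_Ioc_norm_sub_rpow_rpow {s q y x : ℝ} (hsq : -1 < s * q) (hyx : y ≤ x) :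
    ∫ t in Ioc y x, ‖(x - t) ^ s‖ ^ q = (x - y) ^ (s * q + 1) / (s * q + 1) := by
  rw [setIntegral_congr_fun measurableSet_Ioc fun t ht =>
      norm_rpow_rpow_of_nonneg (sub_nonneg.2 ht.2),
    ← intervalIntegral.integral_of_le hyx, integral_sub_rpow hsq, sub_self,
    zero_rpow (by linarith), sub_zero]

lemma setIntegral_Ioc_norm_sub_rpow_sub_rpow_rpow_le {s q a y x : ℝ} (hs : s ≤ 0) (hq : 1 ≤ q)
    (hsq : -1 < s * q) (hay : a ≤ y) (hyx : y ≤ x) :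
    ∫ t in Ioc a y, ‖(x - t) ^ s - (y - t) ^ s‖ ^ q ≤
      (x - y) ^ (s * q + 1) / (s * q + 1) := by
  have hβ : 0 < s * q + 1 := by linarith
  have hpt : ∀ t ∈ Ioo a y,
      ‖(x - t) ^ s - (y - t) ^ s‖ ^ q ≤ (y - t) ^ (s * q) - (x - t) ^ (s * q) := by
    intro t ht
    have hty : 0 < y - t := sub_pos.2 ht.2
    have hle : (x - t) ^ s ≤ (y - t) ^ s := rpow_le_rpow_of_nonpos hty (by linarith) hs
    rw [norm_sub_rev, norm_of_nonneg (sub_nonneg.2 hle), rpow_mul hty.le, rpow_mul (by linarith)]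
    exact rpow_sub_le_rpow_sub_rpow (rpow_nonneg (by linarith) _) hle hq
  have hy : IntegrableOn (fun t => (y - t) ^ (s * q)) (Ioc a y) :=
    integrableOn_sub_rpow_Ioc hsq a y
  have hx : IntegrableOn (fun t => (x - t) ^ (s * q)) (Ioc a y) :=
    (integrableOn_sub_rpow_Ioc hsq a x).mono_set (Ioc_subset_Ioc_right hyx)
  calc ∫ t in Ioc a y, ‖(x - t) ^ s - (y - t) ^ s‖ ^ q
      ≤ ∫ t in Ioo a y, ((y - t) ^ (s * q) - (x - t) ^ (s * q)) := by
        rw [integral_Ioc_eq_integral_Ioo]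
        refine integral_mono_of_nonneg (ae_of_all _ fun _ => rpow_nonneg (norm_nonneg _) _)
          ((hy.sub hx).mono_set Ioo_subset_Ioc_self) ?_
        filter_upwards [ae_restrict_mem measurableSet_Ioo] with t ht using hpt t ht
    _ = ((y - a) ^ (s * q + 1) - ((x - a) ^ (s * q + 1) - (x - y) ^ (s * q + 1))) /
          (s * q + 1) := by
        rw [← integral_Ioc_eq_integral_Ioo, ← intervalIntegral.integral_of_le hay,
          intervalIntegral.integral_sub, integral_sub_rpow hsq, integral_sub_rpow hsq, sub_self,
          zero_rpow hβ.ne', sub_zero]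
        · ring
        exacts [(intervalIntegrable_iff_integrableOn_Ioc_of_le hay).2 hy,
          (intervalIntegrable_iff_integrableOn_Ioc_of_le hay).2 hx]
    _ ≤ (x - y) ^ (s * q + 1) / (s * q + 1) := by
        gcongr
        have : (y - a) ^ (s * q + 1) ≤ (x - a) ^ (s * q + 1) := by gcongr
        linarith

lemma leftRLInt_sub_leftRLInt {α a x y : ℝ} {f : ℝ → ℝ}
    (hxa : IntervalIntegrable (fun t => f t * (x - t) ^ (α - 1)) volume a y)
    (hxy : IntervalIntegrable (fun t => f t * (x - t) ^ (α - 1)) volume y x)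
    (hya : IntervalIntegrable (fun t => f t * (y - t) ^ (α - 1)) volume a y) :
    leftRLInt α a f x - leftRLInt α a f y = 1 / Gamma α *
      ((∫ t in a..y, f t * ((x - t) ^ (α - 1) - (y - t) ^ (α - 1))) +
        ∫ t in y..x, f t * (x - t) ^ (α - 1)) := by
  simp only [leftRLInt, mul_sub, intervalIntegral.integral_sub hxa hya,
    ← intervalIntegral.integral_add_adjacent_intervals hxa hxy]
  ring

theorem abs_leftRLInt_sub_le {α p q : ℝ} (hα : 0 < α) (hα1 : α ≤ 1)
    (hpq : p.HolderConjugate q) (hαq : -1 < (α - 1) * q) {a b x y : ℝ} {f : ℝ → ℝ}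
    (hf : MemLp f (ENNReal.ofReal p) (volume.restrict (Ioc a b)))
    (hay : a ≤ y) (hyx : y ≤ x) (hxb : x ≤ b) :
    |leftRLInt α a f x - leftRLInt α a f y| ≤
      2 / Gamma α * (1 / ((α - 1) * q + 1)) ^ (1 / q) *
        (eLpNorm f (ENNReal.ofReal p) (volume.restrict (Ioc a b))).toReal *
          (x - y) ^ (α - 1 / p) := by
  have := hpq.ennrealOfReal
  have hq := hpq.symm.pos
  have hΓ := Gamma_pos_of_pos hα
  set N := (eLpNorm f (ENNReal.ofReal p) (volume.restrict (Ioc a b))).toReal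
  set β := (α - 1) * q + 1
  have hβ : 0 < β := by linarith
  have hkx := memLp_sub_rpow_Ioc hq hαq a x
  have hkxa := hkx.mono_measure (Measure.restrict_mono (Ioc_subset_Ioc_right hyx) le_rfl)
  have hkxy := hkx.mono_measure (Measure.restrict_mono (Ioc_subset_Ioc_left hay) le_rfl)
  have hkya := memLp_sub_rpow_Ioc hq hαq a y
  have h₁ : |∫ t in a..y, f t * ((x - t) ^ (α - 1) - (y - t) ^ (α - 1))| ≤
      N * ((x - y) ^ β / β) ^ (1 / q) :=
    abs_intervalIntegral_mul_le_of_Ioc_subset hpq hf le_rfl hay (hyx.trans hxb) (hkxa.sub hkya)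
      (setIntegral_Ioc_norm_sub_rpow_sub_rpow_rpow_le (by linarith) hpq.symm.lt.le hαq hay hyx)
  have h₂ : |∫ t in y..x, f t * (x - t) ^ (α - 1)| ≤ N * ((x - y) ^ β / β) ^ (1 / q) :=
    abs_intervalIntegral_mul_le_of_Ioc_subset hpq hf hay hyx hxb hkxy
      (setIntegral_Ioc_norm_sub_rpow_rpow hαq hyx).le
  have hK : ((x - y) ^ β / β) ^ (1 / q) = (1 / β) ^ (1 / q) * (x - y) ^ (α - 1 / p) := by
    rw [div_eq_mul_one_div, mul_rpow (by positivity) (by positivity), ← rpow_mul (by linarith),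
      ← mul_div_assoc, mul_one, hpq.sub_one_mul_add_one_div, mul_comm]
  have hfy := hf.mono_measure (Measure.restrict_mono (Ioc_subset_Ioc_right (hyx.trans hxb)) le_rfl)
  have hfyx := hf.mono_measure (Measure.restrict_mono (Ioc_subset_Ioc hay hxb) le_rfl)
  rw [leftRLInt_sub_leftRLInt
      ((intervalIntegrable_iff_integrableOn_Ioc_of_le hay).2 (hfy.integrable_mul hkxa))
      ((intervalIntegrable_iff_integrableOn_Ioc_of_le hyx).2 (hfyx.integrable_mul hkxy))
      ((intervalIntegrable_iff_integrableOn_Ioc_of_le hay).2 (hfy.integrable_mul hkya)),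
    abs_mul, abs_of_pos (by positivity)]
  calc 1 / Gamma α * |(∫ t in a..y, f t * ((x - t) ^ (α - 1) - (y - t) ^ (α - 1))) +
        ∫ t in y..x, f t * (x - t) ^ (α - 1)|
      ≤ 1 / Gamma α *
          (N * ((x - y) ^ β / β) ^ (1 / q) + N * ((x - y) ^ β / β) ^ (1 / q)) := by
        gcongr
        exact (abs_add_le _ _).trans (add_le_add h₁ h₂)
    _ = _ := by rw [hK]; ring

/-- For `αp > 1` and `f ∈ L^p((a,b))`, the left fractional integral `I^α f`
is Hölder continuous of exponent `α - 1/p`: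
`|I^α f(x) - I^α f(y)| ≤ C ‖f‖_{L^p} |x-y|^{α-1/p}`, `C = C(α,p)`. -/
theorem stmt10 (α p : ℝ) (hα : 0 < α) (hα1 : α < 1) (hp : 1 < p) (hαp : 1 < α * p) :
    ∃ C > 0, ∀ a b : ℝ, a < b → ∀ f : ℝ → ℝ,
      MemLp f (ENNReal.ofReal p) (volume.restrict (Set.Ioo a b)) →
      ∀ x ∈ Set.Icc a b, ∀ y ∈ Set.Icc a b,
        |leftRLInt α a f x - leftRLInt α a f y|
          ≤ C * (eLpNorm f (ENNReal.ofReal p) (volume.restrict (Set.Ioo a b))).toReal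
            * |x - y| ^ (α - 1 / p) := by
  obtain ⟨q, hpq⟩ : ∃ q, p.HolderConjugate q := ⟨_, .conjExponent hp⟩
  have hβ : 0 < (α - 1) * q + 1 := by
    rw [← div_pos_iff_of_pos_right hpq.symm.pos, hpq.sub_one_mul_add_one_div, sub_pos,
      div_lt_iff₀ hpq.pos]
    linarith
  have hΓ := Gamma_pos_of_pos hα
  refine ⟨2 / Gamma α * (1 / ((α - 1) * q + 1)) ^ (1 / q), by positivity, ?_⟩
  intro a b _ f hf x hx y hy
  rw [Measure.restrict_congr_set Ioo_ae_eq_Ioc] at hf ⊢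
  rcases le_total y x with hyx | hxy
  · rw [abs_of_nonneg (sub_nonneg.2 hyx)]
    exact abs_leftRLInt_sub_le hα hα1.le hpq (by linarith) hf hy.1 hyx hx.2
  · rw [abs_sub_comm, abs_sub_comm x, abs_of_nonneg (sub_nonneg.2 hxy)]
    exact abs_leftRLInt_sub_le hα hα1.le hpq (by linarith) hf hx.1 hxy hy.2
end

section
/- Let Ω ⊆ ℝ, α > 0, 1 ≤ p < ∞. The space W^{α,p}±(Ω) = {u ∈ L^p(Ω) : the weak fractional derivative D^α u exists and belongs to L^p(Ω)} (for 0 < α < 1) equipped with the norm (‖u‖_{L^p}^p + ‖D^α u‖_{L^p}^p)^{1/p} is a Banach space. -/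
open MeasureTheory Real Set Filter Topology
open scoped ENNReal

/-!
The `L^p` limits `U`, `V` of the two Cauchy sequences exist by completeness of `L^p`. The
identity `∫ vₙ φ = ∫ uₙ D₊^α φ` passes to the limit because on the bounded set `Ω` both `φ` and
`D₊^α φ` are bounded, so integration against them is continuous for `L^p` convergence on a finite
measure space. After the substitution `y = z + t`,
`D₊^α φ (x) = -Γ(1-α)⁻¹ ∫₀^∞ φ'(x + t) t^(-α) dt`, which is bounded for `x ≥ a`: `φ'` vanishes
beyond the support of `φ`, and `t^(-α)` is integrable near `0` because `α < 1`.
-/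

section Lp

variable {X E ι : Type*} {m : MeasurableSpace X} [NormedAddCommGroup E] {μ : Measure X}
  {p : ℝ≥0∞}

theorem exists_memLp_tendsto_eLpNorm_of_cauchy [CompleteSpace E] (hp : 1 ≤ p)
    {f : ℕ → X → E} (hf : ∀ n, MemLp (f n) p μ)
    (hcau : ∀ ε : ℝ≥0∞, 0 < ε → ∃ N, ∀ m ≥ N, ∀ n ≥ N, eLpNorm (f m - f n) p μ < ε) :
    ∃ g, MemLp g p μ ∧ Tendsto (fun n => eLpNorm (f n - g) p μ) atTop (𝓝 0) := by
  have := Fact.mk hp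
  have hcauchy : CauchySeq fun n => (hf n).toLp (f n) := by
    refine EMetric.cauchySeq_iff.2 fun ε hε => (hcau ε hε).imp fun N hN m hm n hn => ?_
    rw [Lp.edist_toLp_toLp]
    exact hN m hm n hn
  obtain ⟨F, hF⟩ := cauchySeq_tendsto_of_complete hcauchy
  rw [← Lp.toLp_coeFn F (Lp.memLp F)] at hF
  exact ⟨F, Lp.memLp F, (Lp.tendsto_Lp_iff_tendsto_eLpNorm'' f hf F (Lp.memLp F)).1 hF⟩

theorem tendsto_eLpNorm_one_of_tendsto_eLpNorm [IsFiniteMeasure μ] (hp : 1 ≤ p) {l : Filter ι}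
    {f : ι → X → E} (hf : ∀ i, AEStronglyMeasurable (f i) μ)
    (h : Tendsto (fun i => eLpNorm (f i) p μ) l (𝓝 0)) :
    Tendsto (fun i => eLpNorm (f i) 1 μ) l (𝓝 0) := by
  have hc : μ univ ^ (1 / (1 : ℝ≥0∞).toReal - 1 / p.toReal) ≠ ∞ :=
    ENNReal.rpow_ne_top_of_nonneg (by
      rw [ENNReal.toReal_one, div_one, sub_nonneg, one_div, ← ENNReal.toReal_inv]
      exact ENNReal.toReal_le_of_le_ofReal zero_le_one (by simpa using ENNReal.inv_le_one.2 hp))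
      (measure_ne_top μ _)
  refine tendsto_of_tendsto_of_tendsto_of_le_of_le tendsto_const_nhds ?_ (fun _ => bot_le)
    fun i => eLpNorm_le_eLpNorm_mul_rpow_measure_univ hp (hf i)
  simpa using ENNReal.Tendsto.mul_const h (Or.inr hc)

theorem tendsto_integral_mul_of_tendsto_eLpNorm [IsFiniteMeasure μ] (hp : 1 ≤ p) {l : Filter ι}
    {w : ι → X → ℝ} {W g : X → ℝ} {C : ℝ} (hw : ∀ i, MemLp (w i) p μ)
    (hW : AEStronglyMeasurable W μ) (hg : AEStronglyMeasurable g μ) (hgC : ∀ᵐ x ∂μ, ‖g x‖ ≤ C)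
    (h : Tendsto (fun i => eLpNorm (w i - W) p μ) l (𝓝 0)) :
    Tendsto (fun i => ∫ x, w i x * g x ∂μ) l (𝓝 (∫ x, W x * g x ∂μ)) := by
  refine tendsto_integral_of_L1' _ (hW.mul hg)
    (Eventually.of_forall fun i => ((hw i).integrable hp).mul_bdd hg hgC) ?_
  have hL1 := tendsto_eLpNorm_one_of_tendsto_eLpNorm hp
    (fun i => (hw i).aestronglyMeasurable.sub hW) h
  refine tendsto_of_tendsto_of_tendsto_of_le_of_le tendsto_const_nhds
    (by simpa using ENNReal.Tendsto.const_mul hL1 (Or.inr (ENNReal.ofReal_ne_top (r := C))))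
    (fun _ => bot_le) fun i => eLpNorm_le_mul_eLpNorm_of_ae_le_mul ?_ 1
  filter_upwards [hgC] with x hx
  simp only [Pi.sub_apply, Pi.mul_apply]
  rw [← sub_mul, norm_mul, mul_comm]
  exact mul_le_mul_of_nonneg_right hx (norm_nonneg _)

end Lp

theorem setIntegral_Ioi_eq_setIntegral_Ioi_zero_comp_add (f : ℝ → ℝ) (z : ℝ) :
    ∫ y in Ioi z, f y = ∫ t in Ioi 0, f (z + t) := by
  rw [← (measurePreserving_add_left volume z).setIntegral_preimage_emb
    (measurableEmbedding_addLeft z) f (Ioi z)]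
  simp

theorem HasCompactSupport.exists_forall_lt_eq_zero {E : Type*} [Zero E] [TopologicalSpace E]
    {f : ℝ → E} (hf : HasCompactSupport f) : ∃ R, ∀ y, R < y → f y = 0 := by
  obtain ⟨R, hR⟩ := hf.isCompact.bddAbove
  exact ⟨R, fun y hy => image_eq_zero_of_notMem_tsupport fun hmem => (hR hmem).not_gt hy⟩

section RiemannLiouville

variable {α : ℝ}

theorem exists_integrable_bound_comp_add_mul_rpow_neg (hα : α < 1) {f : ℝ → ℝ}
    (hf : Continuous f) (hfs : HasCompactSupport f) (a : ℝ) :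
    ∃ g : ℝ → ℝ, Integrable g (volume.restrict (Ioi 0)) ∧
      ∀ z, a ≤ z → ∀ t, 0 < t → ‖f (z + t) * t ^ (-α)‖ ≤ g t := by
  obtain ⟨C, hC⟩ := hf.bounded_above_of_compact_support hfs
  obtain ⟨R, hR⟩ := hfs.exists_forall_lt_eq_zero
  have hrpow : IntegrableOn (fun t : ℝ => C * t ^ (-α)) (Ioc 0 (R - a)) :=
    (((intervalIntegral.intervalIntegrable_rpow' (by linarith)).const_mul C).def'.mono_set
      Ioc_subset_uIoc)
  refine ⟨(Ioc 0 (R - a)).indicator fun t => C * t ^ (-α),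
    ((integrable_indicator_iff measurableSet_Ioc).2 hrpow).restrict, fun z hz t ht => ?_⟩
  by_cases htR : t ≤ R - a
  · rw [indicator_of_mem (show t ∈ Ioc 0 (R - a) from ⟨ht, htR⟩), norm_mul,
      norm_of_nonneg (rpow_nonneg ht.le _)]
    exact mul_le_mul_of_nonneg_right (hC _) (rpow_nonneg ht.le _)
  · rw [hR _ (by linarith), zero_mul, norm_zero]
    exact indicator_nonneg (fun t ht => mul_nonneg ((norm_nonneg _).trans (hC 0))
      (rpow_nonneg ht.1.le _)) t

theorem hasDerivAt_integral_comp_add_mul_rpow_neg (hα : α < 1) {φ : ℝ → ℝ}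
    (hφ : ContDiff ℝ 1 φ) (hφs : HasCompactSupport φ) (x : ℝ) :
    HasDerivAt (fun z => ∫ t in Ioi 0, φ (z + t) * t ^ (-α))
      (∫ t in Ioi 0, deriv φ (x + t) * t ^ (-α)) x := by
  have hφ' : Continuous (deriv φ) := hφ.continuous_deriv le_rfl
  have hmeas : ∀ {f : ℝ → ℝ}, Continuous f → ∀ z,
      AEStronglyMeasurable (fun t => f (z + t) * t ^ (-α)) (volume.restrict (Ioi 0)) :=
    fun hf z => ((hf.comp (continuous_const_add z)).measurable.mul
      (measurable_id.pow_const _)).aestronglyMeasurable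
  obtain ⟨g, hg, hφg⟩ := exists_integrable_bound_comp_add_mul_rpow_neg hα hφ.continuous hφs x
  obtain ⟨g', hg', hφ'g'⟩ := exists_integrable_bound_comp_add_mul_rpow_neg hα hφ' hφs.deriv (x - 1)
  refine (hasDerivAt_integral_of_dominated_loc_of_deriv_le
    (F' := fun z t => deriv φ (z + t) * t ^ (-α)) (Metric.ball_mem_nhds x one_pos)
    (Eventually.of_forall (hmeas hφ.continuous))
    (hg.mono' (hmeas hφ.continuous x) ?_) (hmeas hφ' x) ?_ hg' ?_).2
  · exact (ae_restrict_iff' measurableSet_Ioi).2 (ae_of_all _ fun t ht => hφg x le_rfl t ht)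
  · refine (ae_restrict_iff' measurableSet_Ioi).2 (ae_of_all _ fun t ht z hz => hφ'g' z ?_ t ht)
    linarith [(abs_lt.1 (Real.dist_eq z x ▸ Metric.mem_ball.1 hz)).1]
  · refine ae_of_all _ fun t z _ => ?_
    simpa using (((hφ.differentiable one_ne_zero) (z + t)).hasDerivAt.comp z
      ((hasDerivAt_id z).add_const t)).mul_const (t ^ (-α))

theorem rightRLDerivR_eq_integral (hα : α < 1) {φ : ℝ → ℝ} (hφ : ContDiff ℝ 1 φ)
    (hφs : HasCompactSupport φ) (x : ℝ) :
    rightRLDerivR α φ x = -(1 / Gamma (1 - α)) * ∫ t in Ioi 0, deriv φ (x + t) * t ^ (-α) := by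
  have htranslate : (fun z => ∫ y in Ioi z, φ y * (y - z) ^ (-α)) =
      fun z => ∫ t in Ioi 0, φ (z + t) * t ^ (-α) := by
    ext z
    simp [setIntegral_Ioi_eq_setIntegral_Ioi_zero_comp_add _ z]
  rw [rightRLDerivR, htranslate, (hasDerivAt_integral_comp_add_mul_rpow_neg hα hφ hφs x).deriv]

theorem exists_forall_ge_abs_rightRLDerivR_le (hα : α < 1) {φ : ℝ → ℝ} (hφ : ContDiff ℝ 1 φ)
    (hφs : HasCompactSupport φ) (a : ℝ) :
    ∃ B, ∀ x, a ≤ x → |rightRLDerivR α φ x| ≤ B := by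
  obtain ⟨g, hg, hφ'g⟩ := exists_integrable_bound_comp_add_mul_rpow_neg hα
    (hφ.continuous_deriv le_rfl) hφs.deriv a
  refine ⟨|1 / Gamma (1 - α)| * ∫ t in Ioi 0, g t, fun x hx => ?_⟩
  rw [rightRLDerivR_eq_integral hα hφ hφs, abs_mul, abs_neg, ← norm_eq_abs (∫ _ in _, _)]
  exact mul_le_mul_of_nonneg_left (norm_integral_le_of_norm_le hg
    ((ae_restrict_iff' measurableSet_Ioi).2 (ae_of_all _ (hφ'g x hx)))) (abs_nonneg _)

end RiemannLiouville

theorem isLeftWeakFracDerivOn_of_tendsto_eLpNorm {α : ℝ} {Ω : Set ℝ} {p : ℝ≥0∞} {ι : Type*}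
    {l : Filter ι} [l.NeBot] (hα : α < 1) (hΩ : Bornology.IsBounded Ω) (hp : 1 ≤ p)
    {u v : ι → ℝ → ℝ} {U V : ℝ → ℝ} (huv : ∀ i, IsLeftWeakFracDerivOn α Ω (u i) (v i))
    (hu : ∀ i, MemLp (u i) p (volume.restrict Ω)) (hv : ∀ i, MemLp (v i) p (volume.restrict Ω))
    (hU : AEStronglyMeasurable U (volume.restrict Ω))
    (hV : AEStronglyMeasurable V (volume.restrict Ω))
    (huU : Tendsto (fun i => eLpNorm (u i - U) p (volume.restrict Ω)) l (𝓝 0))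
    (hvV : Tendsto (fun i => eLpNorm (v i - V) p (volume.restrict Ω)) l (𝓝 0)) :
    IsLeftWeakFracDerivOn α Ω U V := by
  have : IsFiniteMeasure (volume.restrict Ω) := isFiniteMeasure_restrict.2 hΩ.measure_lt_top.ne
  intro φ hφ hφs hφΩ
  obtain ⟨a, ha⟩ := hΩ.bddBelow
  obtain ⟨B, hB⟩ := exists_forall_ge_abs_rightRLDerivR_le hα (hφ.of_le (by simp)) hφs a
  obtain ⟨C, hC⟩ := hφ.continuous.bounded_above_of_compact_support hφs
  have hDφ : Measurable (rightRLDerivR α φ) := (measurable_deriv _).const_mul _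
  refine tendsto_nhds_unique ((tendsto_integral_mul_of_tendsto_eLpNorm hp hv hV
    hφ.continuous.aestronglyMeasurable (ae_of_all _ hC) hvV).congr
      fun i => huv i φ hφ hφs hφΩ) ?_
  exact tendsto_integral_mul_of_tendsto_eLpNorm hp hu hU hDφ.aestronglyMeasurable
    (ae_restrict_of_ae_restrict_of_subset ha
      ((ae_restrict_iff' measurableSet_Ici).2 (ae_of_all _ hB))) huU

theorem stmt12_general (α p a b : ℝ) (hα1 : α < 1) (hp : 1 ≤ p)
    (u v : ℕ → ℝ → ℝ)
    (hu : ∀ n, MemLp (u n) (ENNReal.ofReal p) (volume.restrict (Set.Ioo a b)))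
    (hw : ∀ n, IsLeftWeakFracDerivOn α (Set.Ioo a b) (u n) (v n))
    (hv : ∀ n, MemLp (v n) (ENNReal.ofReal p) (volume.restrict (Set.Ioo a b)))
    (hcauchy : ∀ ε : ℝ≥0∞, 0 < ε → ∃ N : ℕ, ∀ m ≥ N, ∀ n ≥ N,
      eLpNorm (fun x => u m x - u n x) (ENNReal.ofReal p) (volume.restrict (Set.Ioo a b)) +
      eLpNorm (fun x => v m x - v n x) (ENNReal.ofReal p) (volume.restrict (Set.Ioo a b)) < ε) :
    ∃ U V : ℝ → ℝ,
      MemLp U (ENNReal.ofReal p) (volume.restrict (Set.Ioo a b)) ∧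
      IsLeftWeakFracDerivOn α (Set.Ioo a b) U V ∧
      MemLp V (ENNReal.ofReal p) (volume.restrict (Set.Ioo a b)) ∧
      Filter.Tendsto
        (fun n => eLpNorm (fun x => u n x - U x) (ENNReal.ofReal p)
          (volume.restrict (Set.Ioo a b))) Filter.atTop (nhds 0) ∧
      Filter.Tendsto
        (fun n => eLpNorm (fun x => v n x - V x) (ENNReal.ofReal p)
          (volume.restrict (Set.Ioo a b))) Filter.atTop (nhds 0) := by
  have hp' : 1 ≤ ENNReal.ofReal p := ENNReal.one_le_ofReal.2 hp
  obtain ⟨U, hU, huU⟩ := exists_memLp_tendsto_eLpNorm_of_cauchy hp' hu fun ε hε =>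
    (hcauchy ε hε).imp fun _ hN m hm n hn => le_self_add.trans_lt (hN m hm n hn)
  obtain ⟨V, hV, hvV⟩ := exists_memLp_tendsto_eLpNorm_of_cauchy hp' hv fun ε hε =>
    (hcauchy ε hε).imp fun _ hN m hm n hn => le_add_self.trans_lt (hN m hm n hn)
  exact ⟨U, V, hU, isLeftWeakFracDerivOn_of_tendsto_eLpNorm hα1 (Metric.isBounded_Ioo a b) hp' hw
    hu hv hU.aestronglyMeasurable hV.aestronglyMeasurable huU hvV, hV, huU, hvV⟩

/-- The space `{u ∈ L^p((a,b)) : D^α u ∈ L^p((a,b))}` with norm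
`(‖u‖_p^p + ‖D^α u‖_p^p)^{1/p}` is a Banach space: every Cauchy sequence (in both components)
converges in the space. -/
theorem stmt12 (α p a b : ℝ) (hα : 0 < α) (hα1 : α < 1) (hp : 1 ≤ p) (hab : a < b)
    (u v : ℕ → ℝ → ℝ)
    (hu : ∀ n, MemLp (u n) (ENNReal.ofReal p) (volume.restrict (Set.Ioo a b)))
    (hw : ∀ n, IsLeftWeakFracDerivOn α (Set.Ioo a b) (u n) (v n))
    (hv : ∀ n, MemLp (v n) (ENNReal.ofReal p) (volume.restrict (Set.Ioo a b)))
    (hcauchy : ∀ ε : ℝ≥0∞, 0 < ε → ∃ N : ℕ, ∀ m ≥ N, ∀ n ≥ N,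
      eLpNorm (fun x => u m x - u n x) (ENNReal.ofReal p) (volume.restrict (Set.Ioo a b)) +
      eLpNorm (fun x => v m x - v n x) (ENNReal.ofReal p) (volume.restrict (Set.Ioo a b)) < ε) :
    ∃ U V : ℝ → ℝ,
      MemLp U (ENNReal.ofReal p) (volume.restrict (Set.Ioo a b)) ∧
      IsLeftWeakFracDerivOn α (Set.Ioo a b) U V ∧
      MemLp V (ENNReal.ofReal p) (volume.restrict (Set.Ioo a b)) ∧
      Filter.Tendsto
        (fun n => eLpNorm (fun x => u n x - U x) (ENNReal.ofReal p)
          (volume.restrict (Set.Ioo a b))) Filter.atTop (nhds 0) ∧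
      Filter.Tendsto
        (fun n => eLpNorm (fun x => v n x - V x) (ENNReal.ofReal p)
          (volume.restrict (Set.Ioo a b))) Filter.atTop (nhds 0) :=
  stmt12_general α p a b hα1 hp u v hu hw hv hcauchy
end

section
/- Let 0 < α < 1 and let u ∈ L^p((a,b)) with left weak fractional derivative D^α u ∈ L^p((a,b)) for some 1 ≤ p < ∞, and suppose the constant c^{1-α} in the fundamental theorem representation u = c^{1-α}(x-a)^{α-1} + I^α(D^α u) vanishes. Then ‖u‖_{L^p((a,b))} ≤ ((b-a)^α/Γ(α+1)) ‖D^α u‖_{L^p((a,b))}. -/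
/-!
On an interval of length `L`, the Riemann–Liouville integral `I^α v` is dominated pointwise by the
integral operator with kernel `(x - y)^(α-1) / Γ(α)` truncated to `0 ≤ x - y < L`. Every row and
every column of this kernel integrates to `L^α / Γ(α + 1)`, so the Schur test (Hölder's inequality
against the kernel, then Tonelli) bounds the operator on `L^p` by that constant.
-/

open MeasureTheory Real Set Filter Topology
open scoped ENNReal

section SchurTest

variable {X Y : Type*} [MeasurableSpace X] [MeasurableSpace Y] {μ : Measure X} {ν : Measure Y}

theorem ENNReal.rpow_lintegral_mul_le {q : ℝ} (hq : 1 ≤ q) {w f : X → ℝ≥0∞}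
    (hw : AEMeasurable w μ) (hf : AEMeasurable f μ) :
    (∫⁻ x, w x * f x ∂μ) ^ q ≤ (∫⁻ x, w x ∂μ) ^ (q - 1) * ∫⁻ x, w x * f x ^ q ∂μ := by
  have hq0 : 0 < q := by linarith
  have h1q : 0 ≤ 1 - 1 / q := sub_nonneg.2 ((div_le_one hq0).2 hq)
  have holder := ENNReal.lintegral_mul_norm_pow_le (g := fun x => w x * f x ^ q) hw
    (hw.mul (hf.pow_const q)) h1q (by positivity) (sub_add_cancel 1 (1 / q))
  have split : ∀ x, w x ^ (1 - 1 / q) * (w x * f x ^ q) ^ (1 / q) = w x * f x := by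
    intro x
    rw [ENNReal.mul_rpow_of_nonneg _ _ (by positivity), ← ENNReal.rpow_mul,
      mul_one_div_cancel hq0.ne', ENNReal.rpow_one, ← mul_assoc,
      ← ENNReal.rpow_add_of_nonneg _ _ h1q (by positivity), sub_add_cancel, ENNReal.rpow_one]
  simp only [split] at holder
  calc (∫⁻ x, w x * f x ∂μ) ^ q
      ≤ ((∫⁻ x, w x ∂μ) ^ (1 - 1 / q) * (∫⁻ x, w x * f x ^ q ∂μ) ^ (1 / q)) ^ q :=
        ENNReal.rpow_le_rpow holder hq0.le
    _ = (∫⁻ x, w x ∂μ) ^ (q - 1) * ∫⁻ x, w x * f x ^ q ∂μ := by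
        rw [ENNReal.mul_rpow_of_nonneg _ _ hq0.le, ← ENNReal.rpow_mul, ← ENNReal.rpow_mul,
          one_div_mul_cancel hq0.ne', ENNReal.rpow_one, sub_mul, one_mul,
          one_div_mul_cancel hq0.ne']

variable [SFinite μ] [SFinite ν]

theorem lintegral_rpow_lintegral_mul_le {q : ℝ} (hq : 1 ≤ q) {K : X → Y → ℝ≥0∞}
    (hK : Measurable (Function.uncurry K)) {f : Y → ℝ≥0∞} (hf : Measurable f) {C : ℝ≥0∞}
    (hrow : ∀ᵐ x ∂μ, ∫⁻ y, K x y ∂ν ≤ C) (hcol : ∀ᵐ y ∂ν, ∫⁻ x, K x y ∂μ ≤ C) :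
    ∫⁻ x, (∫⁻ y, K x y * f y ∂ν) ^ q ∂μ ≤ C ^ q * ∫⁻ y, f y ^ q ∂ν := by
  have hfq : Measurable fun y => f y ^ q := hf.pow_const q
  have hKf : Measurable (Function.uncurry fun x y => K x y * f y ^ q) :=
    hK.mul (hfq.comp measurable_snd)
  calc ∫⁻ x, (∫⁻ y, K x y * f y ∂ν) ^ q ∂μ
      ≤ ∫⁻ x, C ^ (q - 1) * ∫⁻ y, K x y * f y ^ q ∂ν ∂μ := by
        refine lintegral_mono_ae ?_
        filter_upwards [hrow] with x hx
        have hKx : Measurable fun y => K x y := hK.comp measurable_prodMk_left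
        refine (ENNReal.rpow_lintegral_mul_le hq hKx.aemeasurable hf.aemeasurable).trans ?_
        gcongr
    _ = C ^ (q - 1) * ∫⁻ y, (∫⁻ x, K x y ∂μ) * f y ^ q ∂ν := by
        have hint : Measurable fun x => ∫⁻ y, K x y * f y ^ q ∂ν := hKf.lintegral_prod_right'
        rw [lintegral_const_mul _ hint, lintegral_lintegral_swap hKf.aemeasurable]
        have hKy : ∀ y, Measurable fun x => K x y := fun y => hK.comp measurable_prodMk_right
        simp only [lintegral_mul_const _ (hKy _)]
    _ ≤ C ^ (q - 1) * ∫⁻ y, C * f y ^ q ∂ν := by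
        gcongr 1
        refine lintegral_mono_ae ?_
        filter_upwards [hcol] with y hy
        gcongr
    _ = C ^ q * ∫⁻ y, f y ^ q ∂ν := by
        have hCq : C ^ q = C ^ (q - 1) * C := by
          conv_lhs => rw [← sub_add_cancel q 1]
          rw [ENNReal.rpow_add_of_nonneg _ _ (by linarith) zero_le_one, ENNReal.rpow_one]
        rw [lintegral_const_mul _ hfq, ← mul_assoc, hCq]

theorem eLpNorm_lintegral_mul_le {p : ℝ≥0∞} (hp : 1 ≤ p) (hp_top : p ≠ ∞)
    {K : X → Y → ℝ≥0∞} (hK : Measurable (Function.uncurry K)) {f : Y → ℝ≥0∞}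
    (hf : AEMeasurable f ν) {C : ℝ≥0∞}
    (hrow : ∀ᵐ x ∂μ, ∫⁻ y, K x y ∂ν ≤ C) (hcol : ∀ᵐ y ∂ν, ∫⁻ x, K x y ∂μ ≤ C) :
    eLpNorm (fun x => ∫⁻ y, K x y * f y ∂ν) p μ ≤ C * eLpNorm f p ν := by
  have hp0 : p ≠ 0 := (zero_lt_one.trans_le hp).ne'
  have hq : 1 ≤ p.toReal := by simpa using ENNReal.toReal_mono hp_top hp
  have hq0 : 0 < p.toReal := by linarith
  have hmk : (fun x => ∫⁻ y, K x y * f y ∂ν) = fun x => ∫⁻ y, K x y * hf.mk f y ∂ν :=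
    funext fun x => lintegral_congr_ae (hf.ae_eq_mk.mono fun y hy => by simp only [hy])
  rw [hmk, eLpNorm_congr_ae hf.ae_eq_mk, eLpNorm_eq_lintegral_rpow_enorm_toReal hp0 hp_top,
    eLpNorm_eq_lintegral_rpow_enorm_toReal hp0 hp_top]
  simp only [enorm_eq_self]
  calc (∫⁻ x, (∫⁻ y, K x y * hf.mk f y ∂ν) ^ p.toReal ∂μ) ^ (1 / p.toReal)
      ≤ (C ^ p.toReal * ∫⁻ y, hf.mk f y ^ p.toReal ∂ν) ^ (1 / p.toReal) :=
        ENNReal.rpow_le_rpow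
          (lintegral_rpow_lintegral_mul_le hq hK hf.measurable_mk hrow hcol) (by positivity)
    _ = C * (∫⁻ y, hf.mk f y ^ p.toReal ∂ν) ^ (1 / p.toReal) := by
        rw [ENNReal.mul_rpow_of_nonneg _ _ (by positivity), ← ENNReal.rpow_mul,
          mul_one_div_cancel hq0.ne', ENNReal.rpow_one]

end SchurTest

section RiemannLiouvilleKernel

noncomputable def truncRLKernel (α L t : ℝ) : ℝ≥0∞ :=
  (Ico 0 L).indicator (fun t => ENNReal.ofReal (t ^ (α - 1) / Gamma α)) t

variable {α L : ℝ}

theorem measurable_truncRLKernel : Measurable (truncRLKernel α L) :=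
  (by fun_prop : Measurable fun t : ℝ => ENNReal.ofReal (t ^ (α - 1) / Gamma α)).indicator
    measurableSet_Ico

theorem lintegral_truncRLKernel (hα : 0 < α) (hL : 0 ≤ L) :
    ∫⁻ t, truncRLKernel α L t = ENNReal.ofReal (L ^ α / Gamma (α + 1)) := by
  have hint : IntegrableOn (fun t : ℝ => t ^ (α - 1) / Gamma α) (Ioc 0 L) :=
    (intervalIntegrable_iff_integrableOn_Ioc_of_le hL).1
      ((intervalIntegral.intervalIntegrable_rpow' (by linarith)).div_const _)
  have hnonneg : 0 ≤ᵐ[volume.restrict (Ioc 0 L)] fun t : ℝ => t ^ (α - 1) / Gamma α :=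
    (ae_restrict_iff' measurableSet_Ioc).2 (ae_of_all _ fun t ht =>
      div_nonneg (rpow_nonneg ht.1.le _) (Gamma_pos_of_pos hα).le)
  simp only [truncRLKernel]
  rw [lintegral_indicator measurableSet_Ico, setLIntegral_congr Ico_ae_eq_Ioc,
    ← ofReal_integral_eq_lintegral_ofReal hint hnonneg, ← intervalIntegral.integral_of_le hL,
    intervalIntegral.integral_div, integral_rpow (Or.inl (by linarith)), sub_add_cancel,
    zero_rpow hα.ne', sub_zero, Gamma_add_one hα.ne']
  congr 1
  field_simp

theorem setLIntegral_truncRLKernel_sub_left_le (hα : 0 < α) (hL : 0 ≤ L) (s : Set ℝ) (x : ℝ) :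
    ∫⁻ y in s, truncRLKernel α L (x - y) ≤ ENNReal.ofReal (L ^ α / Gamma (α + 1)) :=
  (setLIntegral_le_lintegral _ _).trans_eq
    ((lintegral_sub_left_eq_self _ x).trans (lintegral_truncRLKernel hα hL))

theorem setLIntegral_truncRLKernel_sub_right_le (hα : 0 < α) (hL : 0 ≤ L) (s : Set ℝ) (y : ℝ) :
    ∫⁻ x in s, truncRLKernel α L (x - y) ≤ ENNReal.ofReal (L ^ α / Gamma (α + 1)) :=
  (setLIntegral_le_lintegral _ _).trans_eq
    ((lintegral_sub_right_eq_self (truncRLKernel α L) y).trans (lintegral_truncRLKernel hα hL))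

theorem enorm_leftRLInt_le (hα : 0 < α) {a b x : ℝ} (hx : x ∈ Ioo a b) (v : ℝ → ℝ) :
    ‖leftRLInt α a v x‖ₑ ≤ ∫⁻ y in Ioo a b, truncRLKernel α (b - a) (x - y) * ‖v y‖ₑ := by
  rw [leftRLInt, ← intervalIntegral.integral_const_mul, intervalIntegral.integral_of_le hx.1.le]
  refine (enorm_integral_le_lintegral_enorm _).trans ?_
  calc ∫⁻ y in Ioc a x, ‖1 / Gamma α * (v y * (x - y) ^ (α - 1))‖ₑ
      = ∫⁻ y in Ioc a x, truncRLKernel α (b - a) (x - y) * ‖v y‖ₑ := by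
        refine setLIntegral_congr_fun measurableSet_Ioc fun y hy => ?_
        have hxy : x - y ∈ Ico 0 (b - a) := ⟨sub_nonneg.2 hy.2, by linarith [hy.1, hx.2]⟩
        rw [truncRLKernel, indicator_of_mem hxy, mul_comm, ← Real.enorm_of_nonneg
          (div_nonneg (rpow_nonneg hxy.1 _) (Gamma_pos_of_pos hα).le), ← enorm_mul]
        ring_nf
    _ ≤ ∫⁻ y in Ioo a b, truncRLKernel α (b - a) (x - y) * ‖v y‖ₑ :=
        lintegral_mono_set fun y hy => ⟨hy.1, hy.2.trans_lt hx.2⟩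

end RiemannLiouvilleKernel

theorem stmt18_general (α p a b : ℝ) (hα : 0 < α) (hp : 1 ≤ p) (hab : a < b)
    (u v : ℝ → ℝ)
    (hvp : MemLp v (ENNReal.ofReal p) (volume.restrict (Set.Ioo a b)))
    (hrep : u =ᵐ[volume.restrict (Set.Ioo a b)] leftRLInt α a v) :
    eLpNorm u (ENNReal.ofReal p) (volume.restrict (Set.Ioo a b))
      ≤ ENNReal.ofReal ((b - a) ^ α / Real.Gamma (α + 1)) *
        eLpNorm v (ENNReal.ofReal p) (volume.restrict (Set.Ioo a b)) := by
  have hK : Measurable (Function.uncurry fun x y : ℝ => truncRLKernel α (b - a) (x - y)) :=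
    measurable_truncRLKernel.comp (measurable_fst.sub measurable_snd)
  have hL : 0 ≤ b - a := sub_nonneg.2 hab.le
  calc eLpNorm u (ENNReal.ofReal p) (volume.restrict (Ioo a b))
      = eLpNorm (leftRLInt α a v) (ENNReal.ofReal p) (volume.restrict (Ioo a b)) :=
        eLpNorm_congr_ae hrep
    _ ≤ eLpNorm (fun x => ∫⁻ y in Ioo a b, truncRLKernel α (b - a) (x - y) * ‖v y‖ₑ)
          (ENNReal.ofReal p) (volume.restrict (Ioo a b)) := by
        refine eLpNorm_mono_enorm_ae ?_
        filter_upwards [ae_restrict_mem measurableSet_Ioo] with x hx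
        exact enorm_leftRLInt_le hα hx v
    _ ≤ ENNReal.ofReal ((b - a) ^ α / Gamma (α + 1)) *
          eLpNorm (fun y => ‖v y‖ₑ) (ENNReal.ofReal p) (volume.restrict (Ioo a b)) :=
        eLpNorm_lintegral_mul_le (ENNReal.one_le_ofReal.2 hp) ENNReal.ofReal_ne_top hK
          hvp.aestronglyMeasurable.enorm
          (ae_of_all _ (setLIntegral_truncRLKernel_sub_left_le hα hL _))
          (ae_of_all _ (setLIntegral_truncRLKernel_sub_right_le hα hL _))
    _ = ENNReal.ofReal ((b - a) ^ α / Gamma (α + 1)) *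
          eLpNorm v (ENNReal.ofReal p) (volume.restrict (Ioo a b)) := by
        rw [eLpNorm_enorm]

/-- If `u ∈ L^p((a,b))` has left weak fractional derivative `v ∈ L^p((a,b))`
and the kernel constant vanishes, i.e. `u = I^α v` a.e. on `(a,b)`, then
`‖u‖_{L^p} ≤ ((b-a)^α / Γ(α+1)) ‖v‖_{L^p}`. -/
theorem stmt18 (α p a b : ℝ) (hα : 0 < α) (hα1 : α < 1) (hp : 1 ≤ p) (hab : a < b)
    (u v : ℝ → ℝ)
    (hup : MemLp u (ENNReal.ofReal p) (volume.restrict (Set.Ioo a b)))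
    (hwd : IsLeftWeakFracDerivOn α (Set.Ioo a b) u v)
    (hvp : MemLp v (ENNReal.ofReal p) (volume.restrict (Set.Ioo a b)))
    (hrep : u =ᵐ[volume.restrict (Set.Ioo a b)] leftRLInt α a v) :
    eLpNorm u (ENNReal.ofReal p) (volume.restrict (Set.Ioo a b))
      ≤ ENNReal.ofReal ((b - a) ^ α / Real.Gamma (α + 1)) *
        eLpNorm v (ENNReal.ofReal p) (volume.restrict (Set.Ioo a b)) :=
  stmt18_general α p a b hα hp hab u v hvp hrep
end
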